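/- Let 0<α<n, 1<p<n/α, let q satisfy 1/p − 1/q = α/n, and p' = p/(p−1). Let w be a weight with [w]_{A_{p,q}} < ∞, and set v = w^q and σ = w^{−p'}. Then there is a constant C = C(n,p,α) such that for every cube Q in ℝⁿ and every measurable set E ⊂ Q with |E| ≥ |Q|/2, |Q|^{α/n − 1} σ(Q) v(Q)^{1−α/n} ≤ C [w]_{A_{p,q}}^{1 + q/p' + p'/p} σ(E)^{1/p} v(E)^{1/p'}, where σ(E) = ∫_E σ dx and v(E) = ∫_E v dx. -/

import Mathlib

open MeasureTheory ENNReal Set Filter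

noncomputable section

abbrev Rn (n : ℕ) := EuclideanSpace ℝ (Fin n)

/-- The half-open cube with corner `a` and side length `h`. -/
def cube {n : ℕ} (a : Rn n) (h : ℝ) : Set (Rn n) :=
  {x | ∀ i, a i ≤ x i ∧ x i < a i + h}

/-- Average of an `ℝ≥0∞`-valued function over a set (w.r.t. Lebesgue measure). -/
def eavg {n : ℕ} (Q : Set (Rn n)) (g : Rn n → ℝ≥0∞) : ℝ≥0∞ :=
  (volume Q)⁻¹ * ∫⁻ x in Q, g x

/-- A weight: a measurable `ℝ≥0∞`-valued function which is integrable on every cube. -/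
def IsWeight {n : ℕ} (w : Rn n → ℝ≥0∞) : Prop :=
  Measurable w ∧ ∀ (a : Rn n) (h : ℝ), 0 < h → (∫⁻ x in cube a h, w x) < ∞

/-- The fractional integral (Riesz potential) `I_α f`. -/
def fracInt {n : ℕ} (α : ℝ) (f : Rn n → ℝ) (x : Rn n) : ℝ :=
  ∫ y, f y / ‖x - y‖ ^ ((n : ℝ) - α)

/-- The fractional integral of a nonnegative function, as a lower integral. -/
def fracIntNN {n : ℕ} (α : ℝ) (f : Rn n → ℝ) (x : Rn n) : ℝ≥0∞ :=
  ∫⁻ y, ENNReal.ofReal (f y) / ENNReal.ofReal (‖x - y‖ ^ ((n : ℝ) - α))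

/-- The commutator `[b, I_α] f`. -/
def commFracInt {n : ℕ} (α : ℝ) (b f : Rn n → ℝ) (x : Rn n) : ℝ :=
  ∫ y, (b x - b y) * f y / ‖x - y‖ ^ ((n : ℝ) - α)

/-- The `A_{1,q}` characteristic of a weight. -/
def A1qConst {n : ℕ} (q : ℝ) (w : Rn n → ℝ≥0∞) : ℝ≥0∞ :=
  ⨆ (a : Rn n) (h : ℝ) (_ : 0 < h),
    essSup (fun x => (eavg (cube a h) fun y => w y ^ q) ^ (1 / q) * (w x)⁻¹)
      (volume.restrict (cube a h))

/-- The `A_{p,q}` characteristic of a weight (`p'` is the conjugate exponent of `p`). -/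
def ApqConst {n : ℕ} (p' q : ℝ) (w : Rn n → ℝ≥0∞) : ℝ≥0∞ :=
  ⨆ (a : Rn n) (h : ℝ) (_ : 0 < h),
    (eavg (cube a h) fun y => w y ^ q) ^ (1 / q) *
      (eavg (cube a h) fun y => w y ^ (-p')) ^ (1 / p')

/-- The Muckenhoupt `A_p` characteristic of a weight. -/
def ApConst {n : ℕ} (p : ℝ) (σ : Rn n → ℝ≥0∞) : ℝ≥0∞ :=
  ⨆ (a : Rn n) (h : ℝ) (_ : 0 < h),
    eavg (cube a h) σ * (eavg (cube a h) fun y => σ y ^ (1 - p / (p - 1))) ^ (p - 1)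

/-- The BMO norm. -/
def bmoNorm {n : ℕ} (b : Rn n → ℝ) : ℝ≥0∞ :=
  ⨆ (a : Rn n) (h : ℝ) (_ : 0 < h),
    eavg (cube a h) fun x => ENNReal.ofReal |b x - ⨍ y in cube a h, b y|

/-- A dyadic grid: a family of (corner, side length) data of cubes. -/
structure DyadicGrid (n : ℕ) where
  cubes : Set (Rn n × ℝ)
  side_pow : ∀ c ∈ cubes, ∃ k : ℤ, c.2 = (2 : ℝ) ^ k
  nested : ∀ c ∈ cubes, ∀ c' ∈ cubes,
    cube c.1 c.2 ∩ cube c'.1 c'.2 = cube c.1 c.2 ∨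
      cube c.1 c.2 ∩ cube c'.1 c'.2 = cube c'.1 c'.2 ∨
      cube c.1 c.2 ∩ cube c'.1 c'.2 = ∅
  partition : ∀ k : ℤ, ∀ x : Rn n, ∃! c, c ∈ cubes ∧ c.2 = (2 : ℝ) ^ k ∧ x ∈ cube c.1 c.2

/-- A sparse family of cubes. -/
def IsSparse {n : ℕ} (S : Set (Rn n × ℝ)) : Prop :=
  ∀ c ∈ S,
    volume (⋃ c' ∈ {c' ∈ S | cube c'.1 c'.2 ⊂ cube c.1 c.2}, cube c'.1 c'.2) ≤
      volume (cube c.1 c.2) / 2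

/-- The dyadic fractional integral operator associated to a family `S` of cubes. -/
def sumIalpha {n : ℕ} (α : ℝ) (S : Set (Rn n × ℝ)) (f : Rn n → ℝ) (x : Rn n) : ℝ≥0∞ :=
  ∑' c : S, (cube c.1.1 c.1.2).indicator
    (fun _ => volume (cube c.1.1 c.1.2) ^ (α / (n : ℝ)) *
      eavg (cube c.1.1 c.1.2) fun y => ENNReal.ofReal (f y)) x

/-- The dyadic commutator associated to a family `S` of cubes. -/
def sumComm {n : ℕ} (α : ℝ) (S : Set (Rn n × ℝ)) (b f : Rn n → ℝ) (x : Rn n) : ℝ≥0∞ :=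
  ∑' c : S, (cube c.1.1 c.1.2).indicator
    (fun z => volume (cube c.1.1 c.1.2) ^ (α / (n : ℝ)) *
      eavg (cube c.1.1 c.1.2) fun y => ENNReal.ofReal (|b z - b y| * f y)) x

/-- The dyadic fractional maximal operator associated to a family `S` of cubes. -/
def dyadicMax {n : ℕ} (α : ℝ) (S : Set (Rn n × ℝ)) (f : Rn n → ℝ) (x : Rn n) : ℝ≥0∞ :=
  ⨆ (c : S) (_ : x ∈ cube c.1.1 c.1.2),
    volume (cube c.1.1 c.1.2) ^ (α / (n : ℝ)) *
      eavg (cube c.1.1 c.1.2) fun y => ENNReal.ofReal |f y|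

/-- The normalized Luxemburg norm of `f` on `Q` w.r.t. the Young function `Φ`
and the measure `σ dx`. -/
def luxNorm {n : ℕ} (Φ : ℝ → ℝ) (Q : Set (Rn n)) (σ : Rn n → ℝ≥0∞) (f : Rn n → ℝ) : ℝ≥0∞ :=
  sInf {l : ℝ≥0∞ | ∃ lr : ℝ, 0 < lr ∧ l = ENNReal.ofReal lr ∧
    (∫⁻ x in Q, σ x)⁻¹ * ∫⁻ x in Q, ENNReal.ofReal (Φ (|f x| / lr)) * σ x ≤ 1}

/-- The weighted dyadic Orlicz fractional maximal operator. -/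
def maxOrlicz {n : ℕ} (Φ : ℝ → ℝ) (α : ℝ) (S : Set (Rn n × ℝ)) (σ : Rn n → ℝ≥0∞)
    (f : Rn n → ℝ) (x : Rn n) : ℝ≥0∞ :=
  ⨆ (c : S) (_ : x ∈ cube c.1.1 c.1.2),
    (∫⁻ y in cube c.1.1 c.1.2, σ y) ^ (α / (n : ℝ)) * luxNorm Φ (cube c.1.1 c.1.2) σ f

/-- The weighted dyadic fractional maximal operator (`Φ(t) = t` case). -/
def maxWeighted {n : ℕ} (α : ℝ) (S : Set (Rn n × ℝ)) (σ : Rn n → ℝ≥0∞)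
    (f : Rn n → ℝ) (x : Rn n) : ℝ≥0∞ :=
  ⨆ (c : S) (_ : x ∈ cube c.1.1 c.1.2),
    (∫⁻ y in cube c.1.1 c.1.2, σ y) ^ (α / (n : ℝ)) *
      ((∫⁻ y in cube c.1.1 c.1.2, σ y)⁻¹ * ∫⁻ y in cube c.1.1 c.1.2, ENNReal.ofReal |f y| * σ y)

set_option maxHeartbeats 1000000

lemma volume_cube {n : ℕ} (a : Rn n) (h : ℝ) :
    volume (cube a h) = ENNReal.ofReal h ^ n := by
  have : cube a h = (MeasurableEquiv.toLp 2 (Fin n → ℝ)).symm ⁻¹'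
      (Set.pi univ fun i => Ico (a i) (a i + h)) := by
    ext x; simp [cube, Set.mem_pi]
  rw [this, (EuclideanSpace.volume_preserving_symm_measurableEquiv_toLp (Fin n)).measure_preimage
    (MeasurableSet.univ_pi fun i => measurableSet_Ico).nullMeasurableSet,
    volume_pi_pi]
  simp

lemma aux1 {X u v A : ℝ≥0∞} {s t : ℝ} (hs : 0 ≤ s) (ht : 0 ≤ t)
    (hX0 : X ≠ 0) (hXt : X ≠ ∞)
    (h : (X⁻¹ * u) ^ s * (X⁻¹ * v) ^ t ≤ A) :
    u ^ s * v ^ t ≤ A * (X ^ s * X ^ t) := by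
  have e1 : (X ^ s)⁻¹ * X ^ s = 1 :=
    ENNReal.inv_mul_cancel (ENNReal.rpow_pos (pos_iff_ne_zero.mpr hX0) hXt).ne'
      (ENNReal.rpow_ne_top_of_nonneg hs hXt)
  have e2 : (X ^ t)⁻¹ * X ^ t = 1 :=
    ENNReal.inv_mul_cancel (ENNReal.rpow_pos (pos_iff_ne_zero.mpr hX0) hXt).ne'
      (ENNReal.rpow_ne_top_of_nonneg ht hXt)
  have h1 : u ^ s * v ^ t = ((X⁻¹ * u) ^ s * (X⁻¹ * v) ^ t) * (X ^ s * X ^ t) := by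
    rw [ENNReal.mul_rpow_of_nonneg _ _ hs, ENNReal.mul_rpow_of_nonneg _ _ ht,
      ENNReal.inv_rpow, ENNReal.inv_rpow]
    calc u ^ s * v ^ t
        = ((X ^ s)⁻¹ * X ^ s) * ((X ^ t)⁻¹ * X ^ t) * (u ^ s * v ^ t) := by
          rw [e1, e2]; ring
      _ = (X ^ s)⁻¹ * u ^ s * ((X ^ t)⁻¹ * v ^ t) * (X ^ s * X ^ t) := by ring
  rw [h1]
  exact mul_le_mul_left h _

theorem Apq_sparse_substitution (n : ℕ) (hn : 0 < n) (α p q p' : ℝ)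
    (hα : 0 < α) (hαn : α < n) (hp : 1 < p) (hpn : p < n / α)
    (hq : 1 / p - 1 / q = α / n) (hp' : p' = p / (p - 1)) :
    ∃ C : ℝ≥0∞, C ≠ ∞ ∧
      ∀ w : Rn n → ℝ≥0∞, IsWeight w → ApqConst p' q w < ∞ →
        ∀ (a : Rn n) (h : ℝ), 0 < h →
          ∀ E : Set (Rn n), MeasurableSet E → E ⊆ cube a h →
            volume (cube a h) / 2 ≤ volume E →
            volume (cube a h) ^ (α / (n : ℝ) - 1) * (∫⁻ x in cube a h, w x ^ (-p')) *
                (∫⁻ x in cube a h, w x ^ q) ^ (1 - α / (n : ℝ)) ≤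
              C * ApqConst p' q w ^ (1 + q / p' + p' / p) *
                ((∫⁻ x in E, w x ^ (-p')) ^ (1 / p) * (∫⁻ x in E, w x ^ q) ^ (1 / p')) := by
  -- real-number preliminaries
  have hn' : (0:ℝ) < n := by exact_mod_cast hn
  have hp0 : (0:ℝ) < p := by linarith
  have hp1 : p - 1 > 0 := by linarith
  have hp'pos : 0 < p' := by rw [hp']; positivity
  have hβ0 : 0 < α / (n:ℝ) := div_pos hα hn'
  have hβ1 : α / (n:ℝ) < 1 := (div_lt_one hn').mpr hαn
  have hqinv : 0 < 1/q := by
    rw [show (1:ℝ)/q = 1/p - α/n by linarith]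
    have h2 : p * α < n := (lt_div_iff₀ hα).mp hpn
    have h1 : α / n < 1 / p := by
      rw [div_lt_div_iff₀ hn' hp0]
      nlinarith
    linarith
  have hq0 : 0 < q := one_div_pos.mp hqinv
  have hcp : 1/p + 1/p' = 1 := by rw [hp']; field_simp; ring
  have hcq : 1/p' + 1/q = 1 - α/(n:ℝ) := by linarith
  have hrpos : (0:ℝ) < 1 + p'/q := by positivity
  have hr'pos : (0:ℝ) < 1 + q/p' := by positivity
  have hq0' : q ≠ 0 := hq0.ne'
  have hp'0 : p' ≠ 0 := hp'pos.ne'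
  have hrconj : Real.HolderConjugate (1 + p'/q) (1 + q/p') :=
    ⟨by rw [inv_one, inv_eq_one_div, inv_eq_one_div]; field_simp; ring, by positivity,
      by positivity⟩
  have hid1 : -(p'/(1 + p'/q)) * (1 + p'/q) = -p' := by field_simp
  have hid2 : (p'/(1 + p'/q)) * (1 + q/p') = q := by field_simp; ring
  have hid3 : (1/(1 + p'/q)) * (1 + p'/q) = 1 := by field_simp
  have hid4 : (1/(1 + q/p')) * (1 + p'/q) = p'/q := by field_simp; ring
  have hid5 : (1/(1 + p'/q)) * (1 + q/p') = q/p' := by field_simp; ring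
  have hid6 : (1/(1 + q/p')) * (1 + q/p') = 1 := by field_simp
  refine ⟨(2:ℝ≥0∞) ^ ((1 + p'/q)/p) * (2:ℝ≥0∞) ^ ((1 + q/p')/p'),
    ENNReal.mul_ne_top (ENNReal.rpow_ne_top_of_nonneg (by positivity) ENNReal.ofNat_ne_top)
      (ENNReal.rpow_ne_top_of_nonneg (by positivity) ENNReal.ofNat_ne_top), ?_⟩
  rintro w ⟨hwm, hwint⟩ hA a h hh E hEm hEQ hE2
  set A := ApqConst p' q w with hAdef
  have hAfin : A ≠ ∞ := hA.ne
  set X := volume (cube a h) with hXdef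
  set vQ := ∫⁻ x in cube a h, w x ^ q with hvQdef
  set σQ := ∫⁻ x in cube a h, w x ^ (-p') with hσQdef
  set vE := ∫⁻ x in E, w x ^ q with hvEdef
  set σE := ∫⁻ x in E, w x ^ (-p') with hσEdef
  have hX0 : X ≠ 0 := by
    rw [hXdef, volume_cube]
    exact pow_ne_zero _ (ENNReal.ofReal_pos.mpr hh).ne'
  have hXfin : X ≠ ∞ := by
    rw [hXdef, volume_cube]; exact pow_ne_top ENNReal.ofReal_ne_top
  have hXinv0 : X⁻¹ ≠ 0 := ENNReal.inv_ne_zero.mpr hXfin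
  -- degenerate cases
  by_cases hσQ0 : σQ = 0
  · rw [hσQ0, mul_zero, zero_mul]; exact zero_le
  by_cases hvQ0 : vQ = 0
  · rw [hvQ0, ENNReal.zero_rpow_of_pos (by linarith : (0:ℝ) < 1 - α/(n:ℝ)), mul_zero]
    exact zero_le
  -- the A_{p,q} estimate on the cube Q
  have hBA : (X⁻¹ * vQ) ^ (1/q) * (X⁻¹ * σQ) ^ (1/p') ≤ A := by
    have : (eavg (cube a h) fun y => w y ^ q) ^ (1 / q) *
        (eavg (cube a h) fun y => w y ^ (-p')) ^ (1 / p') ≤ ApqConst p' q w :=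
      le_iSup_of_le a (le_iSup_of_le h (le_iSup_of_le hh le_rfl))
    simpa [eavg] using this
  -- finiteness
  have hvQfin : vQ ≠ ∞ := by
    intro htop
    have h2 : (X⁻¹ * σQ) ^ (1/p') ≠ 0 := by
      rw [Ne, ENNReal.rpow_eq_zero_iff]
      rintro (⟨hc, -⟩ | ⟨-, hc⟩)
      · exact (mul_ne_zero hXinv0 hσQ0) hc
      · linarith [one_div_pos.mpr hp'pos]
    have h1 : (X⁻¹ * vQ) ^ (1/q) * (X⁻¹ * σQ) ^ (1/p') = ∞ := by
      rw [htop, ENNReal.mul_top hXinv0, ENNReal.top_rpow_of_pos hqinv, ENNReal.top_mul h2]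
    exact hAfin (top_le_iff.mp (h1 ▸ hBA))
  have hσQfin : σQ ≠ ∞ := by
    intro htop
    have h2 : (X⁻¹ * vQ) ^ (1/q) ≠ 0 := by
      rw [Ne, ENNReal.rpow_eq_zero_iff]
      rintro (⟨hc, -⟩ | ⟨-, hc⟩)
      · exact (mul_ne_zero hXinv0 hvQ0) hc
      · linarith
    have h1 : (X⁻¹ * vQ) ^ (1/q) * (X⁻¹ * σQ) ^ (1/p') = ∞ := by
      rw [htop, ENNReal.mul_top hXinv0, ENNReal.top_rpow_of_pos (one_div_pos.mpr hp'pos),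
        ENNReal.mul_top h2]
    exact hAfin (top_le_iff.mp (h1 ▸ hBA))
  have hA0 : A ≠ 0 := by
    intro h0
    rw [h0, le_zero_iff] at hBA
    rcases mul_eq_zero.mp hBA with hc | hc
    · rw [ENNReal.rpow_eq_zero_iff] at hc
      rcases hc with ⟨hc, -⟩ | ⟨-, hc⟩
      · exact (mul_ne_zero hXinv0 hvQ0) hc
      · linarith
    · rw [ENNReal.rpow_eq_zero_iff] at hc
      rcases hc with ⟨hc, -⟩ | ⟨-, hc⟩
      · exact (mul_ne_zero hXinv0 hσQ0) hc
      · linarith [one_div_pos.mpr hp'pos]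
  -- a.e. nondegeneracy of w on Q
  have haeQ0 : ∀ᵐ x ∂(volume.restrict (cube a h)), w x ≠ 0 := by
    filter_upwards [ae_lt_top (hwm.pow_const (-p')) hσQfin] with x hx hx0
    rw [hx0, ENNReal.zero_rpow_of_neg (by linarith : -p' < 0)] at hx
    exact absurd hx (by simp)
  have haeQtop : ∀ᵐ x ∂(volume.restrict (cube a h)), w x ≠ ∞ := by
    filter_upwards [ae_lt_top (hwm.pow_const q) hvQfin] with x hx hxt
    rw [hxt, ENNReal.top_rpow_of_pos hq0] at hx
    exact absurd hx (by simp)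
  -- Hölder: volume E ≤ σE^{1/r} vE^{1/r'}
  have hkey : volume E ≤ σE ^ (1/(1 + p'/q)) * vE ^ (1/(1 + q/p')) := by
    have hfg : ∀ᵐ x ∂(volume.restrict E),
        w x ^ (-(p'/(1 + p'/q))) * w x ^ (p'/(1 + p'/q)) = 1 := by
      filter_upwards [ae_restrict_of_ae_restrict_of_subset hEQ haeQ0,
        ae_restrict_of_ae_restrict_of_subset hEQ haeQtop] with x h0 ht
      rw [ENNReal.rpow_neg, ENNReal.inv_mul_cancel]
      · rw [Ne, ENNReal.rpow_eq_zero_iff]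
        rintro (⟨hc, -⟩ | ⟨hc, -⟩) <;> [exact h0 hc; exact ht hc]
      · exact ENNReal.rpow_ne_top_of_nonneg (by positivity) ht
    have hH := ENNReal.lintegral_mul_le_Lp_mul_Lq (volume.restrict E) hrconj
      ((hwm.pow_const (-(p'/(1 + p'/q)))).aemeasurable)
      ((hwm.pow_const (p'/(1 + p'/q))).aemeasurable)
    simp only [Pi.mul_apply] at hH
    calc volume E = ∫⁻ _ in E, 1 := (setLIntegral_one E).symm
      _ = ∫⁻ x in E, w x ^ (-(p'/(1 + p'/q))) * w x ^ (p'/(1 + p'/q)) :=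
          (lintegral_congr_ae hfg).symm
      _ ≤ (∫⁻ x in E, (w x ^ (-(p'/(1 + p'/q)))) ^ (1 + p'/q)) ^ (1/(1 + p'/q)) *
          (∫⁻ x in E, (w x ^ (p'/(1 + p'/q))) ^ (1 + q/p')) ^ (1/(1 + q/p')) := hH
      _ = σE ^ (1/(1 + p'/q)) * vE ^ (1/(1 + q/p')) := by
          congr 2
          · refine lintegral_congr fun x => ?_
            rw [← ENNReal.rpow_mul, hid1]
          · refine lintegral_congr fun x => ?_
            rw [← ENNReal.rpow_mul, hid2]
  have hvol2 : X ≤ 2 * volume E := by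
    rw [mul_comm]
    exact (ENNReal.div_le_iff_le_mul (Or.inl two_ne_zero) (Or.inl ENNReal.ofNat_ne_top)).mp hE2
  have hvEle : vE ≤ vQ := lintegral_mono_set hEQ
  have hσEle : σE ≤ σQ := lintegral_mono_set hEQ
  -- main A_{p,q} inequality with integrals
  have hApq : vQ ^ (1/q) * σQ ^ (1/p') ≤ A * X ^ (1 - α/(n:ℝ)) := by
    have h1 := aux1 hqinv.le (one_div_pos.mpr hp'pos).le hX0 hXfin hBA
    rwa [← ENNReal.rpow_add _ _ hX0 hXfin,
      show 1/q + 1/p' = 1 - α/(n:ℝ) by linarith] at h1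
  -- doubling for σ
  have hBp : (X⁻¹ * vQ) ^ (p'/q) * (X⁻¹ * σQ) ^ (1:ℝ) ≤ A ^ p' := by
    calc (X⁻¹ * vQ) ^ (p'/q) * (X⁻¹ * σQ) ^ (1:ℝ)
        = (X⁻¹ * vQ) ^ ((1/q)*p') * (X⁻¹ * σQ) ^ ((1/p')*p') := by
          rw [show (1/q)*p' = p'/q by ring, show (1/p')*p' = (1:ℝ) by field_simp]
      _ = ((X⁻¹ * vQ) ^ (1/q) * (X⁻¹ * σQ) ^ (1/p')) ^ p' := by
          rw [ENNReal.mul_rpow_of_nonneg _ _ hp'pos.le, ← ENNReal.rpow_mul, ← ENNReal.rpow_mul]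
      _ ≤ A ^ p' := ENNReal.rpow_le_rpow hBA hp'pos.le
  have hXr : X ^ (1 + p'/q) ≤ (2:ℝ≥0∞) ^ (1 + p'/q) * (σE * vE ^ (p'/q)) := by
    calc X ^ (1 + p'/q) ≤ (2 * volume E) ^ (1 + p'/q) :=
          ENNReal.rpow_le_rpow hvol2 hrpos.le
      _ = (2:ℝ≥0∞) ^ (1 + p'/q) * (volume E) ^ (1 + p'/q) :=
          ENNReal.mul_rpow_of_nonneg _ _ hrpos.le
      _ ≤ (2:ℝ≥0∞) ^ (1 + p'/q) *
          (σE ^ (1/(1 + p'/q)) * vE ^ (1/(1 + q/p'))) ^ (1 + p'/q) := by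
          gcongr
      _ = (2:ℝ≥0∞) ^ (1 + p'/q) * (σE * vE ^ (p'/q)) := by
          rw [ENNReal.mul_rpow_of_nonneg _ _ hrpos.le, ← ENNReal.rpow_mul, ← ENNReal.rpow_mul,
            hid3, hid4, ENNReal.rpow_one]
  have hdσ : σQ ≤ (2:ℝ≥0∞) ^ (1 + p'/q) * A ^ p' * σE := by
    have hpow0 : vQ ^ (p'/q) ≠ 0 := by
      rw [Ne, ENNReal.rpow_eq_zero_iff]
      rintro (⟨hc, -⟩ | ⟨hc, -⟩) <;> [exact hvQ0 hc; exact hvQfin hc]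
    have hpowt : vQ ^ (p'/q) ≠ ∞ :=
      ENNReal.rpow_ne_top_of_nonneg (by positivity) hvQfin
    have h2 : σQ * vQ ^ (p'/q) ≤ ((2:ℝ≥0∞) ^ (1 + p'/q) * A ^ p' * σE) * vQ ^ (p'/q) := by
      calc σQ * vQ ^ (p'/q) = vQ ^ (p'/q) * σQ ^ (1:ℝ) := by rw [ENNReal.rpow_one]; ring
        _ ≤ A ^ p' * (X ^ (p'/q) * X ^ (1:ℝ)) := by
            have := aux1 (by positivity : (0:ℝ) ≤ p'/q) zero_le_one hX0 hXfin hBp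
            exact this
        _ = A ^ p' * X ^ (1 + p'/q) := by
            rw [← ENNReal.rpow_add _ _ hX0 hXfin, show p'/q + 1 = 1 + p'/q by ring]
        _ ≤ A ^ p' * ((2:ℝ≥0∞) ^ (1 + p'/q) * (σE * vE ^ (p'/q))) :=
            mul_le_mul_right hXr _
        _ ≤ A ^ p' * ((2:ℝ≥0∞) ^ (1 + p'/q) * (σE * vQ ^ (p'/q))) := by gcongr
        _ = ((2:ℝ≥0∞) ^ (1 + p'/q) * A ^ p' * σE) * vQ ^ (p'/q) := by ring
    exact (ENNReal.mul_le_mul_iff_left hpow0 hpowt).mp h2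
  -- doubling for v
  have hBq : (X⁻¹ * vQ) ^ (1:ℝ) * (X⁻¹ * σQ) ^ (q/p') ≤ A ^ q := by
    calc (X⁻¹ * vQ) ^ (1:ℝ) * (X⁻¹ * σQ) ^ (q/p')
        = (X⁻¹ * vQ) ^ ((1/q)*q) * (X⁻¹ * σQ) ^ ((1/p')*q) := by
          rw [show (1/q)*q = (1:ℝ) by field_simp, show (1/p')*q = q/p' by ring]
      _ = ((X⁻¹ * vQ) ^ (1/q) * (X⁻¹ * σQ) ^ (1/p')) ^ q := by
          rw [ENNReal.mul_rpow_of_nonneg _ _ hq0.le, ← ENNReal.rpow_mul, ← ENNReal.rpow_mul]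
      _ ≤ A ^ q := ENNReal.rpow_le_rpow hBA hq0.le
  have hXr' : X ^ (1 + q/p') ≤ (2:ℝ≥0∞) ^ (1 + q/p') * (σE ^ (q/p') * vE) := by
    calc X ^ (1 + q/p') ≤ (2 * volume E) ^ (1 + q/p') :=
          ENNReal.rpow_le_rpow hvol2 hr'pos.le
      _ = (2:ℝ≥0∞) ^ (1 + q/p') * (volume E) ^ (1 + q/p') :=
          ENNReal.mul_rpow_of_nonneg _ _ hr'pos.le
      _ ≤ (2:ℝ≥0∞) ^ (1 + q/p') *
          (σE ^ (1/(1 + p'/q)) * vE ^ (1/(1 + q/p'))) ^ (1 + q/p') := by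
          gcongr
      _ = (2:ℝ≥0∞) ^ (1 + q/p') * (σE ^ (q/p') * vE) := by
          rw [ENNReal.mul_rpow_of_nonneg _ _ hr'pos.le, ← ENNReal.rpow_mul, ← ENNReal.rpow_mul,
            hid5, hid6, ENNReal.rpow_one]
  have hdv : vQ ≤ (2:ℝ≥0∞) ^ (1 + q/p') * A ^ q * vE := by
    have hpow0 : σQ ^ (q/p') ≠ 0 := by
      rw [Ne, ENNReal.rpow_eq_zero_iff]
      rintro (⟨hc, -⟩ | ⟨hc, -⟩) <;> [exact hσQ0 hc; exact hσQfin hc]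
    have hpowt : σQ ^ (q/p') ≠ ∞ :=
      ENNReal.rpow_ne_top_of_nonneg (by positivity) hσQfin
    have h2 : vQ * σQ ^ (q/p') ≤ ((2:ℝ≥0∞) ^ (1 + q/p') * A ^ q * vE) * σQ ^ (q/p') := by
      calc vQ * σQ ^ (q/p') = vQ ^ (1:ℝ) * σQ ^ (q/p') := by rw [ENNReal.rpow_one]
        _ ≤ A ^ q * (X ^ (1:ℝ) * X ^ (q/p')) :=
            aux1 zero_le_one (by positivity) hX0 hXfin hBq
        _ = A ^ q * X ^ (1 + q/p') := by rw [← ENNReal.rpow_add _ _ hX0 hXfin]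
        _ ≤ A ^ q * ((2:ℝ≥0∞) ^ (1 + q/p') * (σE ^ (q/p') * vE)) :=
            mul_le_mul_right hXr' _
        _ ≤ A ^ q * ((2:ℝ≥0∞) ^ (1 + q/p') * (σQ ^ (q/p') * vE)) := by gcongr
        _ = ((2:ℝ≥0∞) ^ (1 + q/p') * A ^ q * vE) * σQ ^ (q/p') := by ring
    exact (ENNReal.mul_le_mul_iff_left hpow0 hpowt).mp h2
  -- assembling
  have hσQeq : σQ = σQ ^ (1/p') * σQ ^ (1/p) := by
    rw [← ENNReal.rpow_add _ _ hσQ0 hσQfin, show 1/p' + 1/p = (1:ℝ) by linarith,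
      ENNReal.rpow_one]
  have hvQeq : vQ ^ (1 - α/(n:ℝ)) = vQ ^ (1/q) * vQ ^ (1/p') := by
    rw [← ENNReal.rpow_add _ _ hvQ0 hvQfin, show 1/q + 1/p' = 1 - α/(n:ℝ) by linarith]
  calc X ^ (α/(n:ℝ) - 1) * σQ * vQ ^ (1 - α/(n:ℝ))
      = (vQ ^ (1/q) * σQ ^ (1/p')) * (X ^ (α/(n:ℝ) - 1) * (σQ ^ (1/p) * vQ ^ (1/p'))) := by
        conv_lhs => rw [hσQeq, hvQeq]
        ring
    _ ≤ (A * X ^ (1 - α/(n:ℝ))) * (X ^ (α/(n:ℝ) - 1) * (σQ ^ (1/p) * vQ ^ (1/p'))) :=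
        mul_le_mul_left hApq _
    _ = (X ^ (1 - α/(n:ℝ)) * X ^ (α/(n:ℝ) - 1)) * (A * (σQ ^ (1/p) * vQ ^ (1/p'))) := by
        ring
    _ = A * (σQ ^ (1/p) * vQ ^ (1/p')) := by
        rw [← ENNReal.rpow_add _ _ hX0 hXfin,
          show (1 - α/(n:ℝ)) + (α/(n:ℝ) - 1) = (0:ℝ) by ring, ENNReal.rpow_zero, one_mul]
    _ ≤ A * (((2:ℝ≥0∞) ^ (1 + p'/q) * A ^ p' * σE) ^ (1/p) *
          ((2:ℝ≥0∞) ^ (1 + q/p') * A ^ q * vE) ^ (1/p')) := by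
        gcongr
    _ = ((2:ℝ≥0∞) ^ ((1 + p'/q)/p) * (2:ℝ≥0∞) ^ ((1 + q/p')/p')) *
          (A ^ (1:ℝ) * (A ^ (p'/p) * A ^ (q/p'))) * (σE ^ (1/p) * vE ^ (1/p')) := by
        rw [ENNReal.mul_rpow_of_nonneg _ _ (by positivity : (0:ℝ) ≤ 1/p),
          ENNReal.mul_rpow_of_nonneg _ _ (by positivity : (0:ℝ) ≤ 1/p),
          ENNReal.mul_rpow_of_nonneg _ _ (by positivity : (0:ℝ) ≤ 1/p'),
          ENNReal.mul_rpow_of_nonneg _ _ (by positivity : (0:ℝ) ≤ 1/p'),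
          ← ENNReal.rpow_mul, ← ENNReal.rpow_mul, ← ENNReal.rpow_mul, ← ENNReal.rpow_mul,
          show (1 + p'/q) * (1/p) = (1 + p'/q)/p by ring,
          show p' * (1/p) = p'/p by ring,
          show (1 + q/p') * (1/p') = (1 + q/p')/p' by ring,
          show q * (1/p') = q/p' by ring, ENNReal.rpow_one]
        ring
    _ = (2:ℝ≥0∞) ^ ((1 + p'/q)/p) * (2:ℝ≥0∞) ^ ((1 + q/p')/p') * A ^ (1 + q/p' + p'/p) *
          (σE ^ (1/p) * vE ^ (1/p')) := by
        rw [← ENNReal.rpow_add _ _ hA0 hAfin, ← ENNReal.rpow_add _ _ hA0 hAfin,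
          show (1:ℝ) + (p'/p + q/p') = 1 + q/p' + p'/p by ring]
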